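/- arXiv:1408.5274 — 6 statements merged into one kernel-verified Lean document; each statement's English description precedes it below -/
import Mathlib

section
/- A subset P of ℕ^n containing 0 is 1-invariant if and only if the invariant game H whose allowed moves from every position p are exactly the nonzero elements of ℕ^n \ (P − P) that are componentwise ≤ p has P as its set of P-positions. -/
/-- `P` is the set of P-positions of the game `G` (stability + absorbing). -/
def IsPPositions {n : ℕ} (G : (Fin n → ℕ) → Set (Fin n → ℕ))
    (P : Set (Fin n → ℕ)) : Prop :=
  (∀ p ∈ P, ∀ m ∈ G p, p - m ∉ P) ∧ (∀ q, q ∉ P → ∃ m ∈ G q, q - m ∈ P)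

/-- The difference set P − P (only differences staying in ℕ^n). -/
def DiffSet {n : ℕ} (P : Set (Fin n → ℕ)) : Set (Fin n → ℕ) :=
  {m | ∃ x ∈ P, ∃ y ∈ P, y ≤ x ∧ m = x - y}

/-!
If `P` is the set of P-positions of an invariant game with move set `I ∌ 0`, stability forces `I`
to avoid `P − P`, so `I` lies inside the move set `ℕ^n \ ((P − P) ∪ {0})` of the complement game.
Enlarging the move set preserves the absorbing property, and the complement game is stable since
a move from `p ∈ P` to `p - m ∈ P` would put `m` in `P − P`. Conversely, the complement game is
itself invariant.
-/

section

variable {n : ℕ} {P : Set (Fin n → ℕ)}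

theorem mem_diffSet_of_sub_mem {p m : Fin n → ℕ} (hp : p ∈ P) (hpm : p - m ∈ P) (hmp : m ≤ p) :
    m ∈ DiffSet P :=
  ⟨p, hp, p - m, hpm, tsub_le_self, (tsub_tsub_cancel_of_le hmp).symm⟩

theorem IsPPositions.of_subset {G G' : (Fin n → ℕ) → Set (Fin n → ℕ)}
    (hG : IsPPositions G P) (hstab : ∀ p ∈ P, ∀ m ∈ G' p, p - m ∉ P)
    (hGG' : ∀ p, G p ⊆ G' p) : IsPPositions G' P :=
  ⟨hstab, fun q hq =>
    let ⟨m, hm, hqm⟩ := hG.2 q hq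
    ⟨m, hGG' q hm, hqm⟩⟩

theorem IsPPositions.disjoint_diffSet {I : Set (Fin n → ℕ)}
    (hI : IsPPositions (fun p => I ∩ {m | m ≤ p}) P) : Disjoint I (DiffSet P) := by
  refine Set.disjoint_left.2 ?_
  rintro _ hm ⟨x, hx, y, hy, hyx, rfl⟩
  exact hI.1 x hx (x - y) ⟨hm, tsub_le_self (a := x)⟩ (by rwa [tsub_tsub_cancel_of_le hyx])

end

theorem one_invariant_iff_complement_diff_game_general (n : ℕ)
    (P : Set (Fin n → ℕ)) :
    (∃ I : Set (Fin n → ℕ), (0 : Fin n → ℕ) ∉ I ∧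
        IsPPositions (fun p => I ∩ {m | m ≤ p}) P) ↔
      IsPPositions (fun p => {m | m ≠ 0 ∧ m ∉ DiffSet P ∧ m ≤ p}) P := by
  have hstab : ∀ p ∈ P, ∀ m ∈ {m | m ≠ 0 ∧ m ∉ DiffSet P ∧ m ≤ p}, p - m ∉ P :=
    fun p hp m ⟨_, hm, hmp⟩ hpm => hm (mem_diffSet_of_sub_mem hp hpm hmp)
  constructor
  · rintro ⟨I, hI0, hI⟩
    refine hI.of_subset hstab fun p m ⟨hmI, hmp⟩ => ⟨?_, ?_, hmp⟩
    · exact ne_of_mem_of_not_mem hmI hI0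
    · exact Set.disjoint_left.1 hI.disjoint_diffSet hmI
  · intro h
    refine ⟨{m | m ≠ 0 ∧ m ∉ DiffSet P}, fun h0 => h0.1 rfl, ?_⟩
    exact h.of_subset (fun p hp m ⟨hmI, hmp⟩ => hstab p hp m ⟨hmI.1, hmI.2, hmp⟩)
      fun p m ⟨hm0, hmD, hmp⟩ => ⟨⟨hm0, hmD⟩, hmp⟩

/-- A subset `P` of ℕ^n containing 0 is 1-invariant iff the invariant game
whose moves are the nonzero elements of ℕ^n \ (P − P) has `P` as its set of
P-positions. -/
theorem one_invariant_iff_complement_diff_game (n : ℕ)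
    (P : Set (Fin n → ℕ)) (h0 : (0 : Fin n → ℕ) ∈ P) :
    (∃ I : Set (Fin n → ℕ), (0 : Fin n → ℕ) ∉ I ∧
        IsPPositions (fun p => I ∩ {m | m ≤ p}) P) ↔
      IsPPositions (fun p => {m | m ≠ 0 ∧ m ∉ DiffSet P ∧ m ≤ p}) P :=
  one_invariant_iff_complement_diff_game_general n P
end

section
/- If a move m can be adjoined to an impartial acyclic game G without changing the set of P-positions, then m ∉ P(G) − P(G); conversely, adjoining any move m with m ∉ P(G) − P(G) to G (allowed from any position p with m ≤ p) leaves the set of P-positions unchanged. -/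
/-! Adjoining a move only adds options, so the P-positions stay absorbing; the question is
whether they stay stable, i.e. whether the new move `m` joins two P-positions `x` and `x - m`.
That happens exactly when `m = x - (x - m)` lies in `P − P`. -/

section

variable {n : ℕ}

def adjoinMove (G : (Fin n → ℕ) → Set (Fin n → ℕ)) (m : Fin n → ℕ) :
    (Fin n → ℕ) → Set (Fin n → ℕ) :=
  fun p => G p ∪ ({m} ∩ {m' | m' ≤ p})

theorem mem_diffSet_iff {P : Set (Fin n → ℕ)} {m : Fin n → ℕ} :
    m ∈ DiffSet P ↔ ∃ x ∈ P, m ≤ x ∧ x - m ∈ P := by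
  constructor
  · rintro ⟨x, hx, y, hy, hyx, rfl⟩
    exact ⟨x, hx, tsub_le_self, by rwa [tsub_tsub_cancel_of_le hyx]⟩
  · rintro ⟨x, hx, hmx, hxm⟩
    exact ⟨x, hx, x - m, hxm, tsub_le_self, (tsub_tsub_cancel_of_le hmx).symm⟩

theorem IsPPositions.adjoinMove_iff {G : (Fin n → ℕ) → Set (Fin n → ℕ)} {P : Set (Fin n → ℕ)}
    (hP : IsPPositions G P) (m : Fin n → ℕ) :
    IsPPositions (adjoinMove G m) P ↔ ∀ x ∈ P, m ≤ x → x - m ∉ P := by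
  constructor
  · rintro ⟨hstable, -⟩ x hx hmx
    exact hstable x hx m (Or.inr ⟨rfl, hmx⟩)
  · intro hm
    refine ⟨?_, fun q hq => ?_⟩
    · rintro p hp m' (hm' | ⟨rfl, hm'p⟩)
      · exact hP.1 p hp m' hm'
      · exact hm p hp hm'p
    · obtain ⟨m', hm', hqm'⟩ := hP.2 q hq
      exact ⟨m', Or.inl hm', hqm'⟩

end

theorem adjoin_move_iff_not_mem_diffSet_general (n : ℕ)
    (G : (Fin n → ℕ) → Set (Fin n → ℕ))
    (P : Set (Fin n → ℕ)) (hP : IsPPositions G P)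
    (m : Fin n → ℕ) :
    IsPPositions (fun p => G p ∪ ({m} ∩ {m' | m' ≤ p})) P ↔ m ∉ DiffSet P := by
  rw [mem_diffSet_iff]
  simp only [not_exists, not_and]
  exact hP.adjoinMove_iff m

/-- A (nonzero) move `m` can be adjoined to an acyclic game `G` without changing
the set of P-positions if and only if `m ∉ P(G) − P(G)`. -/
theorem adjoin_move_iff_not_mem_diffSet (n : ℕ)
    (G : (Fin n → ℕ) → Set (Fin n → ℕ))
    (hG : ∀ p, ∀ m' ∈ G p, m' ≠ 0 ∧ m' ≤ p)
    (P : Set (Fin n → ℕ)) (hP : IsPPositions G P)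
    (m : Fin n → ℕ) (hm : m ≠ 0) :
    IsPPositions (fun p => G p ∪ ({m} ∩ {m' | m' ≤ p})) P ↔ m ∉ DiffSet P :=
  adjoin_move_iff_not_mem_diffSet_general n G P hP m
end

section
/- Let w = v^ω be a periodic binary word over {1,2} with |v|₁ = |v|₂ = ℓ/2 and |v| = ℓ, and let P_w ⊆ ℕ² be its associated set of positions (including (0,0) and symmetric pairs). Then (P_w − P_w) ∩ ℕ² = ((P_w ∩ [0,2ℓ]² − P_w ∩ [0,ℓ]²) ∩ ℕ²) + {k·(ℓ,ℓ) : k ∈ ℕ}. -/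
/-- `A` enumerates (for indices `m ≥ 1`, in increasing order) the positions
`i ≥ 1` where the infinite word `w` carries the letter `a`. -/
def EnumOcc (w : ℕ → ℕ) (a : ℕ) (A : ℕ → ℕ) : Prop :=
  (∀ m n, 1 ≤ m → m < n → A m < A n) ∧
  (∀ m, 1 ≤ m → 1 ≤ A m ∧ w (A m) = a) ∧
  (∀ i, 1 ≤ i → w i = a → ∃ m, 1 ≤ m ∧ A m = i)

/-- The set of positions associated with a binary word. -/
def Pword (A B : ℕ → ℕ) : Set (ℕ × ℕ) :=
  {(0, 0)} ∪ {p | ∃ m, 1 ≤ m ∧ p = (A m, B m)} ∪ {p | ∃ m, 1 ≤ m ∧ p = (B m, A m)}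

/-- The set of componentwise differences X − Y that stay in ℕ². -/
def DiffOf (X Y : Set (ℕ × ℕ)) : Set (ℕ × ℕ) :=
  {d | ∃ x ∈ X, ∃ y ∈ Y, y.1 ≤ x.1 ∧ y.2 ≤ x.2 ∧ d = (x.1 - y.1, x.2 - y.2)}

/-!
Each letter occurs `c = ℓ / 2` times per period, so `A (m + c) = A m + ℓ`, `B (m + c) = B m + ℓ`,
and the first `c` pairs `(A m, B m)` lie in `[1, ℓ]²`. Hence `P_w \ {(0,0)}` consists of the
`(ℓ, ℓ)`-translates of its points in `[1, ℓ]²`. If `y₀ + t(ℓ,ℓ) ≤ x₀ + s(ℓ,ℓ)` for such points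
`x₀, y₀` then `t ≤ s`, and the difference is `x₀ - y₀` (when `s = t`) or
`(x₀ + (ℓ,ℓ)) - y₀ + (s - t - 1)(ℓ,ℓ)`, where `x₀ + (ℓ,ℓ) ∈ P_w ∩ [0, 2ℓ]²`.
-/

open Finset

def occurrences (w : ℕ → ℕ) (a n : ℕ) : Finset ℕ := (Icc 1 n).filter (fun i => w i = a)

lemma card_occurrences_one_add_two {w : ℕ → ℕ} (hbin : ∀ i, 1 ≤ i → w i = 1 ∨ w i = 2) (n : ℕ) :
    #(occurrences w 1 n) + #(occurrences w 2 n) = n := by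
  have htwo : occurrences w 2 n = (Icc 1 n).filter (fun i => ¬ w i = 1) :=
    filter_congr fun i hi => by have := hbin i (mem_Icc.mp hi).1; omega
  rw [htwo, occurrences, card_filter_add_card_filter_not, Nat.card_Icc, Nat.add_sub_cancel]

lemma card_occurrences_add_period {w : ℕ → ℕ} {a ℓ : ℕ} (hper : ∀ i, 1 ≤ i → w (i + ℓ) = w i)
    (n : ℕ) :
    #(occurrences w a (n + ℓ)) = #(occurrences w a n) + #(occurrences w a ℓ) := by
  have hsplit : occurrences w a (n + ℓ) =
      (occurrences w a n).map (addRightEmbedding ℓ) ∪ occurrences w a ℓ := by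
    ext i
    simp only [occurrences, mem_union, mem_map, mem_filter, mem_Icc, addRightEmbedding_apply]
    constructor
    · rintro ⟨⟨hi1, hin⟩, hwi⟩
      by_cases hiℓ : i ≤ ℓ
      · exact Or.inr ⟨⟨hi1, hiℓ⟩, hwi⟩
      · refine Or.inl ⟨i - ℓ, ⟨⟨by omega, by omega⟩, ?_⟩, by omega⟩
        rwa [← hper _ (by omega), Nat.sub_add_cancel (by omega)]
    · rintro (⟨j, ⟨⟨hj1, hjn⟩, hwj⟩, rfl⟩ | ⟨⟨hi1, hiℓ⟩, hwi⟩)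
      · exact ⟨⟨by omega, by omega⟩, by rwa [hper j hj1]⟩
      · exact ⟨⟨hi1, by omega⟩, hwi⟩
  have hdisj : Disjoint ((occurrences w a n).map (addRightEmbedding ℓ)) (occurrences w a ℓ) := by
    simp only [disjoint_left, occurrences, mem_map, mem_filter, mem_Icc, addRightEmbedding_apply]
    rintro _ ⟨j, ⟨⟨hj1, _⟩, _⟩, rfl⟩ ⟨⟨_, _⟩, _⟩
    omega
  rw [hsplit, card_union_of_disjoint hdisj, card_map]

namespace EnumOcc

variable {w : ℕ → ℕ} {a : ℕ} {A : ℕ → ℕ}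

lemma strictMonoOn (hA : EnumOcc w a A) : StrictMonoOn A (Set.Ici 1) :=
  fun m hm n _ hmn => hA.1 m n hm hmn

lemma occurrences_eq_image (hA : EnumOcc w a A) {m : ℕ} (hm : 1 ≤ m) :
    occurrences w a (A m) = (Icc 1 m).image A := by
  ext i
  simp only [occurrences, mem_filter, mem_Icc, mem_image]
  constructor
  · rintro ⟨⟨hi1, him⟩, hwi⟩
    obtain ⟨n, hn, rfl⟩ := hA.2.2 i hi1 hwi
    exact ⟨n, ⟨hn, (hA.strictMonoOn.le_iff_le hn hm).mp him⟩, rfl⟩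
  · rintro ⟨n, ⟨hn, hnm⟩, rfl⟩
    exact ⟨⟨(hA.2.1 n hn).1, (hA.strictMonoOn.le_iff_le hn hm).mpr hnm⟩, (hA.2.1 n hn).2⟩

lemma card_occurrences (hA : EnumOcc w a A) {m : ℕ} (hm : 1 ≤ m) :
    #(occurrences w a (A m)) = m := by
  rw [hA.occurrences_eq_image hm, card_image_of_injOn, Nat.card_Icc, Nat.add_sub_cancel]
  exact hA.strictMonoOn.injOn.mono fun n hn => (mem_Icc.mp hn).1

lemma add_card_period (hA : EnumOcc w a A) {ℓ : ℕ} (hper : ∀ i, 1 ≤ i → w (i + ℓ) = w i)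
    {m : ℕ} (hm : 1 ≤ m) : A (m + #(occurrences w a ℓ)) = A m + ℓ := by
  obtain ⟨hAm1, hwAm⟩ := hA.2.1 m hm
  obtain ⟨n, hn, hAn⟩ := hA.2.2 (A m + ℓ) (by omega) (by rwa [hper _ hAm1])
  have hcount := hA.card_occurrences hn
  rw [hAn, card_occurrences_add_period hper, hA.card_occurrences hm] at hcount
  rw [hcount, hAn]

lemma le_period (hA : EnumOcc w a A) {ℓ m : ℕ} (hm : 1 ≤ m)
    (hmc : m ≤ #(occurrences w a ℓ)) : A m ≤ ℓ := by
  by_contra! hℓ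
  have hsub : insert (A m) (occurrences w a ℓ) ⊆ occurrences w a (A m) := by
    intro i hi
    simp only [mem_insert, occurrences, mem_filter, mem_Icc] at hi ⊢
    rcases hi with rfl | ⟨⟨hi1, hiℓ⟩, hwi⟩
    · exact ⟨⟨(hA.2.1 m hm).1, le_rfl⟩, (hA.2.1 m hm).2⟩
    · exact ⟨⟨hi1, by omega⟩, hwi⟩
  have hnotin : A m ∉ occurrences w a ℓ := by
    simp only [occurrences, mem_filter, mem_Icc]
    omega
  have := card_le_card hsub
  rw [card_insert_of_notMem hnotin, hA.card_occurrences hm] at this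
  omega

end EnumOcc

lemma exists_eq_add_nsmul_of_add_period {α : Type*} [AddMonoid α] {F : ℕ → α} {c : ℕ} {v : α}
    (hc : 0 < c) (hF : ∀ m, 1 ≤ m → F (m + c) = F m + v) :
    ∀ m, 1 ≤ m → ∃ r, 1 ≤ r ∧ r ≤ c ∧ ∃ k : ℕ, F m = F r + k • v := by
  intro m
  induction m using Nat.strong_induction_on with
  | _ m ih =>
    intro hm
    by_cases hmc : m ≤ c
    · exact ⟨m, hm, hmc, 0, by rw [zero_nsmul, add_zero]⟩
    · obtain ⟨r, hr, hrc, k, hk⟩ := ih (m - c) (by omega) (by omega)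
      refine ⟨r, hr, hrc, k + 1, ?_⟩
      rw [← Nat.sub_add_cancel (not_le.mp hmc).le, hF _ (by omega), hk, succ_nsmul, add_assoc]

def IsDiagPeriodic (ℓ : ℕ) (Q : Set (ℕ × ℕ)) : Prop :=
  (∀ q ∈ Q, (q.1 + ℓ, q.2 + ℓ) ∈ Q) ∧
  ∀ q ∈ Q, ∃ q₀ ∈ Q, (1 ≤ q₀.1 ∧ q₀.1 ≤ ℓ) ∧ (1 ≤ q₀.2 ∧ q₀.2 ≤ ℓ) ∧
    ∃ k : ℕ, q = (q₀.1 + k * ℓ, q₀.2 + k * ℓ)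

namespace IsDiagPeriodic

variable {ℓ : ℕ} {Q : Set (ℕ × ℕ)}

lemma union {Q' : Set (ℕ × ℕ)} (hQ : IsDiagPeriodic ℓ Q) (hQ' : IsDiagPeriodic ℓ Q') :
    IsDiagPeriodic ℓ (Q ∪ Q') := by
  refine ⟨fun q hq => hq.imp (hQ.1 q) (hQ'.1 q), fun q hq => ?_⟩
  rcases hq with hq | hq
  · obtain ⟨q₀, hq₀, h⟩ := hQ.2 q hq
    exact ⟨q₀, Or.inl hq₀, h⟩
  · obtain ⟨q₀, hq₀, h⟩ := hQ'.2 q hq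
    exact ⟨q₀, Or.inr hq₀, h⟩

lemma of_add_period {F G : ℕ → ℕ} {c : ℕ} (hc : 0 < c)
    (hF : ∀ m, 1 ≤ m → F (m + c) = F m + ℓ) (hG : ∀ m, 1 ≤ m → G (m + c) = G m + ℓ)
    (hFb : ∀ m, 1 ≤ m → m ≤ c → 1 ≤ F m ∧ F m ≤ ℓ)
    (hGb : ∀ m, 1 ≤ m → m ≤ c → 1 ≤ G m ∧ G m ≤ ℓ) :
    IsDiagPeriodic ℓ {p | ∃ m, 1 ≤ m ∧ p = (F m, G m)} := by
  refine ⟨?_, ?_⟩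
  · rintro _ ⟨m, hm, rfl⟩
    exact ⟨m + c, by omega, by rw [hF m hm, hG m hm]⟩
  · rintro _ ⟨m, hm, rfl⟩
    obtain ⟨r, hr, hrc, k, hk⟩ := exists_eq_add_nsmul_of_add_period (F := fun m => (F m, G m))
      (v := (ℓ, ℓ)) hc (fun m hm => by rw [hF m hm, hG m hm, Prod.mk_add_mk]) m hm
    refine ⟨(F r, G r), ⟨r, hr, rfl⟩, hFb r hr hrc, hGb r hr hrc, k, ?_⟩
    simpa only [Prod.smul_mk, smul_eq_mul, Prod.mk_add_mk] using hk

lemma add_mul_mem (hQ : IsDiagPeriodic ℓ Q) {q : ℕ × ℕ} (hq : q ∈ Q) (k : ℕ) :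
    (q.1 + k * ℓ, q.2 + k * ℓ) ∈ Q := by
  induction k with
  | zero => simpa using hq
  | succ k ih => simpa only [add_mul, one_mul, ← add_assoc] using hQ.1 _ ih

end IsDiagPeriodic

section DiffOf

variable {ℓ : ℕ}

lemma exists_diffOf_box_of_le {P : Set (ℕ × ℕ)} {x y q : ℕ × ℕ} (hx : x ∈ P)
    (hx₁ : x.1 ≤ 2 * ℓ) (hx₂ : x.2 ≤ 2 * ℓ) (hy : y ∈ P) (hy₁ : y.1 ≤ ℓ) (hy₂ : y.2 ≤ ℓ)
    (h₁ : y.1 ≤ x.1) (h₂ : y.2 ≤ x.2) (k : ℕ) (hq : q = (x.1 - y.1 + k * ℓ, x.2 - y.2 + k * ℓ)) :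
    ∃ d ∈ DiffOf (P ∩ {p | p.1 ≤ 2 * ℓ ∧ p.2 ≤ 2 * ℓ}) (P ∩ {p | p.1 ≤ ℓ ∧ p.2 ≤ ℓ}),
      ∃ k : ℕ, q = (d.1 + k * ℓ, d.2 + k * ℓ) :=
  ⟨_, ⟨x, ⟨hx, hx₁, hx₂⟩, y, ⟨hy, hy₁, hy₂⟩, h₁, h₂, rfl⟩, k, hq⟩

variable {Q : Set (ℕ × ℕ)}

lemma IsDiagPeriodic.diffOf_insert_zero (hQ : IsDiagPeriodic ℓ Q) (hne : Q.Nonempty) :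
    DiffOf (insert (0, 0) Q) (insert (0, 0) Q) =
      {q | ∃ d ∈ DiffOf (insert (0, 0) Q ∩ {p | p.1 ≤ 2 * ℓ ∧ p.2 ≤ 2 * ℓ})
                        (insert (0, 0) Q ∩ {p | p.1 ≤ ℓ ∧ p.2 ≤ ℓ}),
           ∃ k : ℕ, q = (d.1 + k * ℓ, d.2 + k * ℓ)} := by
  ext q
  constructor
  · rintro ⟨x, hx, y, hy, h₁, h₂, rfl⟩
    rcases hy with rfl | hy
    · rcases hx with rfl | hx
      · exact exists_diffOf_box_of_le (Set.mem_insert _ _) (by simp) (by simp)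
          (Set.mem_insert _ _) (by simp) (by simp) le_rfl le_rfl 0 (by simp)
      obtain ⟨x₀, hx₀, ⟨-, hx₀₁⟩, ⟨-, hx₀₂⟩, s, rfl⟩ := hQ.2 x hx
      exact exists_diffOf_box_of_le (Set.mem_insert_of_mem _ hx₀) (by omega) (by omega)
        (Set.mem_insert _ _) (by simp) (by simp) (by simp) (by simp) s (by simp)
    obtain ⟨y₀, hy₀, ⟨hy₀₁, hy₀₁'⟩, ⟨-, hy₀₂⟩, t, rfl⟩ := hQ.2 y hy
    rcases hx with rfl | hx
    · simp only at h₁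
      omega
    obtain ⟨x₀, hx₀, ⟨-, hx₀₁⟩, ⟨-, hx₀₂⟩, s, rfl⟩ := hQ.2 x hx
    simp only at h₁ h₂ ⊢
    have hts : t ≤ s := by
      by_contra! hst
      have := Nat.mul_le_mul_right ℓ (Nat.succ_le_of_lt hst)
      rw [Nat.succ_mul] at this
      omega
    obtain ⟨j, rfl⟩ := Nat.exists_eq_add_of_le hts
    rw [add_mul] at h₁ h₂ ⊢
    rcases j with _ | j
    · exact exists_diffOf_box_of_le (Set.mem_insert_of_mem _ hx₀) (by omega) (by omega)
        (Set.mem_insert_of_mem _ hy₀) hy₀₁' hy₀₂ (by omega) (by omega) 0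
        (Prod.ext (by simp only; omega) (by simp only; omega))
    · have hx₀ℓ := Set.mem_insert_of_mem (0, 0) (hQ.1 x₀ hx₀)
      rw [add_mul, one_mul] at h₁ h₂ ⊢
      exact exists_diffOf_box_of_le hx₀ℓ (by simp only; omega) (by simp only; omega)
        (Set.mem_insert_of_mem _ hy₀) hy₀₁' hy₀₂ (by simp only; omega) (by simp only; omega) j
        (Prod.ext (by simp only; omega) (by simp only; omega))
  · rintro ⟨d, ⟨x, ⟨hx, -⟩, y, ⟨hy, -⟩, h₁, h₂, rfl⟩, k, rfl⟩
    rcases hx with rfl | hx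
    · obtain ⟨q, hq⟩ := hne
      exact ⟨_, Set.mem_insert_of_mem _ (hQ.add_mul_mem hq k), q, Set.mem_insert_of_mem _ hq,
        by simp only; omega, by simp only; omega,
        Prod.ext (by simp only; omega) (by simp only; omega)⟩
    · exact ⟨_, Set.mem_insert_of_mem _ (hQ.add_mul_mem hx k), y, hy,
        by simp only; omega, by simp only; omega,
        Prod.ext (by simp only; omega) (by simp only; omega)⟩

end DiffOf

/-- For a periodic binary word with balanced period of length ℓ,
(P_w − P_w) ∩ ℕ² = ((P_w ∩ [0,2ℓ]² − P_w ∩ [0,ℓ]²) ∩ ℕ²) + ℕ·(ℓ,ℓ). -/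
theorem periodic_word_diffSet (w : ℕ → ℕ) (ℓ : ℕ) (hℓ : 1 ≤ ℓ)
    (hbin : ∀ i, 1 ≤ i → w i = 1 ∨ w i = 2)
    (hper : ∀ i, 1 ≤ i → w (i + ℓ) = w i)
    (hcount : ((Finset.Icc 1 ℓ).filter (fun i => w i = 1)).card =
              ((Finset.Icc 1 ℓ).filter (fun i => w i = 2)).card)
    (A B : ℕ → ℕ) (hA : EnumOcc w 1 A) (hB : EnumOcc w 2 B) :
    DiffOf (Pword A B) (Pword A B) =
      {q | ∃ d ∈ DiffOf (Pword A B ∩ {p | p.1 ≤ 2 * ℓ ∧ p.2 ≤ 2 * ℓ})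
                        (Pword A B ∩ {p | p.1 ≤ ℓ ∧ p.2 ≤ ℓ}),
           ∃ k : ℕ, q = (d.1 + k * ℓ, d.2 + k * ℓ)} := by
  set c := #(occurrences w 1 ℓ)
  have hcB : #(occurrences w 2 ℓ) = c := hcount.symm
  have hc : 0 < c := by have := card_occurrences_one_add_two hbin ℓ; omega
  have hAs : ∀ m, 1 ≤ m → A (m + c) = A m + ℓ := fun m hm => hA.add_card_period hper hm
  have hBs : ∀ m, 1 ≤ m → B (m + c) = B m + ℓ := fun m hm => hcB ▸ hB.add_card_period hper hm
  have hAb : ∀ m, 1 ≤ m → m ≤ c → 1 ≤ A m ∧ A m ≤ ℓ :=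
    fun m hm hmc => ⟨(hA.2.1 m hm).1, hA.le_period hm hmc⟩
  have hBb : ∀ m, 1 ≤ m → m ≤ c → 1 ≤ B m ∧ B m ≤ ℓ :=
    fun m hm hmc => ⟨(hB.2.1 m hm).1, hB.le_period hm (hcB ▸ hmc)⟩
  have hQ := (IsDiagPeriodic.of_add_period hc hAs hBs hAb hBb).union
    (IsDiagPeriodic.of_add_period hc hBs hAs hBb hAb)
  rw [Pword, Set.union_assoc, Set.singleton_union]
  exact hQ.diffOf_insert_zero ⟨_, Or.inl ⟨1, le_rfl, rfl⟩⟩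
end

section
/- For every integer s ≥ 1, the positive real root of X³ − sX² − X − 1 is a Pisot number: it is greater than 1 and the other two (complex conjugate) roots have modulus strictly less than 1. -/
/-!
Let `α > 1` be a real root (intermediate value theorem on `[1, s + 2]`). Dividing out `X - α`
leaves `X² + bX + c` with `c = α² - sα - 1 = 1/α` and `b = α - s = c + c²`, so `0 < c < 1` and
`|b| < 1 + c`. By the Schur–Cohn criterion both roots of such a real monic quadratic lie in the
open unit disc: a non-real pair has `|z|² = c`, and real roots are trapped in `(-1, 1)` because
the quadratic is positive at `±1` and its vertex `-b/2` lies in `(-1, 1)`.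
-/

theorem abs_lt_one_of_sq_add_mul_add_eq_zero {b c x : ℝ} (hc : c < 1) (hb : |b| < 1 + c)
    (hx : x ^ 2 + b * x + c = 0) : |x| < 1 := by
  rw [abs_lt] at hb ⊢
  obtain ⟨hb₁, hb₂⟩ := hb
  constructor
  · by_contra! h
    nlinarith [mul_nonneg (neg_nonneg.mpr (by linarith : x + 1 ≤ 0)) (by linarith : 0 ≤ 1 - b - x)]
  · by_contra! h
    nlinarith [mul_nonneg (by linarith : 0 ≤ x - 1) (by linarith : 0 ≤ x + 1 + b)]

theorem Complex.norm_lt_one_of_sq_add_mul_add_eq_zero {b c : ℝ} (hc : |c| < 1) (hb : |b| < 1 + c)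
    {z : ℂ} (hz : z ^ 2 + b * z + c = 0) : ‖z‖ < 1 := by
  have hre : z.re ^ 2 - z.im ^ 2 + b * z.re + c = 0 := by
    simpa [pow_two] using congrArg Complex.re hz
  have him : z.im * (2 * z.re + b) = 0 := by
    have := congrArg Complex.im hz
    simp only [pow_two, add_im, mul_im, ofReal_re, ofReal_im, zero_im] at this
    linear_combination this
  suffices ‖z‖ ^ 2 < 1 from (pow_lt_one_iff_of_nonneg (norm_nonneg z) two_ne_zero).mp this
  rw [Complex.sq_norm, Complex.normSq_apply]
  rcases mul_eq_zero.mp him with hy | hx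
  · have hx : z.re ^ 2 + b * z.re + c = 0 := by rw [hy] at hre; linear_combination hre
    rw [hy, mul_zero, add_zero, ← pow_two, sq_lt_one_iff_abs_lt_one]
    exact abs_lt_one_of_sq_add_mul_add_eq_zero (abs_lt.mp hc).2 hb hx
  · -- a non-real root and its conjugate have product `c`
    have : z.re * z.re + z.im * z.im = c := by linear_combination z.re * hx - hre
    rw [this]
    exact (abs_lt.mp hc).2

theorem cubic_eq_sub_mul_quadratic {R : Type*} [CommRing R] {s α : R}
    (hα : α ^ 3 - s * α ^ 2 - α - 1 = 0) (z : R) :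
    z ^ 3 - s * z ^ 2 - z - 1 = (z - α) * (z ^ 2 + (α - s) * z + (α ^ 2 - s * α - 1)) := by
  linear_combination hα

theorem exists_cubic_root_gt_one (s : ℕ) : ∃ α : ℝ, 1 < α ∧ α ^ 3 - (s : ℝ) * α ^ 2 - α - 1 = 0 := by
  have hs : (0 : ℝ) ≤ s := s.cast_nonneg
  have hcont : Continuous fun x : ℝ => x ^ 3 - (s : ℝ) * x ^ 2 - x - 1 := by fun_prop
  obtain ⟨α, ⟨hα, -⟩, hroot⟩ := intermediate_value_Ioo (by linarith : (1 : ℝ) ≤ s + 2)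
    hcont.continuousOn (show (0 : ℝ) ∈ Set.Ioo _ _ from ⟨by norm_num; linarith, by nlinarith⟩)
  exact ⟨α, hα, hroot⟩

theorem cubic_root_is_pisot_general (s : ℕ) :
    ∃ α : ℝ, 1 < α ∧
      α ^ 3 - (s : ℝ) * α ^ 2 - α - 1 = 0 ∧
      ∀ z : ℂ, z ^ 3 - (s : ℂ) * z ^ 2 - z - 1 = 0 → z ≠ (α : ℂ) →
        ‖z‖ < 1 := by
  obtain ⟨α, hα₁, hα⟩ := exists_cubic_root_gt_one s
  refine ⟨α, hα₁, hα, fun z hz hne => ?_⟩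
  set c := α ^ 2 - s * α - 1 with hc
  have hαc : α * c = 1 := by linear_combination hα
  have hc₀ : 0 < c := by nlinarith
  have hc₁ : c < 1 := by nlinarith
  -- `c = α⁻¹` and `α - s = α⁻¹ + α⁻²`
  have hb : α - s = c + c ^ 2 := by linear_combination (s - α) * hα
  have hαC : (α : ℂ) ^ 3 - s * (α : ℂ) ^ 2 - α - 1 = 0 := by exact_mod_cast hα
  rw [cubic_eq_sub_mul_quadratic hαC, mul_eq_zero] at hz
  refine Complex.norm_lt_one_of_sq_add_mul_add_eq_zero (b := α - s) (c := c)
    (by rw [abs_lt]; constructor <;> linarith) (by rw [hb, abs_lt]; constructor <;> nlinarith) ?_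
  rw [hc]; push_cast
  exact hz.resolve_left (sub_ne_zero.mpr hne)

/-- For every integer s ≥ 1, the positive real root of X³ − sX² − X − 1 is a
Pisot number: it is > 1 and all other complex roots have modulus < 1. -/
theorem cubic_root_is_pisot (s : ℕ) (hs : 1 ≤ s) :
    ∃ α : ℝ, 1 < α ∧
      α ^ 3 - (s : ℝ) * α ^ 2 - α - 1 = 0 ∧
      ∀ z : ℂ, z ^ 3 - (s : ℂ) * z ^ 2 - z - 1 = 0 → z ≠ (α : ℂ) →
        ‖z‖ < 1 :=
  cubic_root_is_pisot_general s
end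

section
/- Let (T_i) be defined by T₀ = 1, T₁ = 2, T₂ = 4, T_{i+3} = T_{i+2} + T_{i+1} + T_i. Every positive integer m has a unique representation m = Σ c_j T_j with digits c_j ∈ {0,1}, leading digit nonzero, and no three consecutive digits all equal to 1. -/
/-!
A 111-free set of indices below `k` has Tribonacci sum `< T k`: according to whether its top
block below `k` is `0`, `10` or `110`, the sum is bounded by `T (k-1)`, `T (k-1) + T (k-2)` or
`T (k-1) + T (k-2) + T (k-3) = T k`. Hence the largest index of a representation of `m` is
determined by `m`, which gives uniqueness by peeling it off. Existence follows the same split: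
`m < T (k+3)` lies in `[0, T (k+2))`, `[T (k+2), T (k+2) + T (k+1))` or
`[T (k+2) + T (k+1), T (k+3))`, giving a representation with top block `0`, `10` or `110`.
-/

open Finset

namespace Finset

theorem subset_range_of_subset_range_add_one {s : Finset ℕ} {n : ℕ} (h : s ⊆ range (n + 1))
    (hn : n ∉ s) : s ⊆ range n :=
  (subset_insert_iff_of_notMem hn).1 (range_add_one ▸ h)

theorem erase_subset_range_of_subset_range_add_one {s : Finset ℕ} {n : ℕ}
    (h : s ⊆ range (n + 1)) : s.erase n ⊆ range n :=
  subset_insert_iff.1 (range_add_one ▸ h)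

end Finset

def NoThreeConsecutive (S : Finset ℕ) : Prop :=
  ∀ j, ¬(j ∈ S ∧ j + 1 ∈ S ∧ j + 2 ∈ S)

namespace NoThreeConsecutive

variable {S S' : Finset ℕ}

theorem mono (hS : NoThreeConsecutive S) (h : S' ⊆ S) : NoThreeConsecutive S' :=
  fun j ⟨h0, h1, h2⟩ => hS j ⟨h h0, h h1, h h2⟩

theorem of_subset_range_two (h : S ⊆ range 2) : NoThreeConsecutive S :=
  fun j ⟨_, _, h2⟩ => by simpa using mem_range.1 (h h2)

theorem insert_insert_of_subset_range {n : ℕ} (hS : NoThreeConsecutive S) (h : S ⊆ range n) :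
    NoThreeConsecutive (insert (n + 2) (insert (n + 1) S)) := by
  intro j ⟨h0, h1, h2⟩
  have hlt : ∀ x ∈ S, x < n := fun x hx => mem_range.1 (h hx)
  simp only [mem_insert] at h0 h1 h2
  refine hS j ⟨?_, ?_, ?_⟩ <;> grind

end NoThreeConsecutive

structure IsTribonacci (T : ℕ → ℕ) : Prop where
  zero : T 0 = 1
  one : T 1 = 2
  two : T 2 = 4
  add_three : ∀ i, T (i + 3) = T (i + 2) + T (i + 1) + T i

namespace IsTribonacci

variable {T : ℕ → ℕ}

theorem id_lt (hT : IsTribonacci T) : ∀ n, n < T n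
  | 0 => by simp [hT.zero]
  | 1 => by simp [hT.one]
  | 2 => by simp [hT.two]
  | n + 3 => by
    have := hT.id_lt (n + 2)
    have := hT.id_lt (n + 1)
    rw [hT.add_three]
    omega

theorem sum_lt_of_subset_range (hT : IsTribonacci T) :
    ∀ {k : ℕ} {S : Finset ℕ}, NoThreeConsecutive S → S ⊆ range k → ∑ j ∈ S, T j < T k
  | 0, _, _, h | 1, _, _, h | 2, _, _, h =>
    (sum_le_sum_of_subset h).trans_lt (by simp [sum_range_succ, hT.zero, hT.one, hT.two])
  | k + 3, S, hS, h => by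
    have hrec := hT.add_three k
    by_cases h2 : k + 2 ∈ S
    · rw [← add_sum_erase S T h2]
      have h' := erase_subset_range_of_subset_range_add_one h
      by_cases h1 : k + 1 ∈ S.erase (k + 2)
      · rw [← add_sum_erase _ T h1]
        have h0 : k ∉ (S.erase (k + 2)).erase (k + 1) := fun hk =>
          hS k ⟨mem_of_mem_erase (mem_of_mem_erase hk), mem_of_mem_erase h1, h2⟩
        have := hT.sum_lt_of_subset_range (hS.mono ((erase_subset _ _).trans (erase_subset _ _)))
          (subset_range_of_subset_range_add_one (erase_subset_range_of_subset_range_add_one h') h0)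
        omega
      · have := hT.sum_lt_of_subset_range (hS.mono (erase_subset _ _))
          (subset_range_of_subset_range_add_one h' h1)
        omega
    · have := hT.sum_lt_of_subset_range hS (subset_range_of_subset_range_add_one h h2)
      omega

theorem mem_iff_le_sum (hT : IsTribonacci T) {k : ℕ} {S : Finset ℕ} (hS : NoThreeConsecutive S)
    (h : S ⊆ range (k + 1)) : k ∈ S ↔ T k ≤ ∑ j ∈ S, T j := by
  refine ⟨fun hk => single_le_sum (fun _ _ => Nat.zero_le _) hk, fun hle => ?_⟩
  by_contra hk
  exact (hT.sum_lt_of_subset_range hS (subset_range_of_subset_range_add_one h hk)).not_ge hle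

theorem eq_of_sum_eq_of_subset_range (hT : IsTribonacci T) {k : ℕ} {S S' : Finset ℕ}
    (hS : NoThreeConsecutive S) (hS' : NoThreeConsecutive S') (h : S ⊆ range k)
    (h' : S' ⊆ range k) (hsum : ∑ j ∈ S, T j = ∑ j ∈ S', T j) : S = S' := by
  induction k generalizing S S' with
  | zero => rw [range_zero, subset_empty] at h h'; rw [h, h']
  | succ k ih =>
    have hmem : k ∈ S ↔ k ∈ S' := by
      rw [hT.mem_iff_le_sum hS h, hT.mem_iff_le_sum hS' h', hsum]
    by_cases hk : k ∈ S
    · have hk' := hmem.1 hk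
      rw [← add_sum_erase S T hk, ← add_sum_erase S' T hk'] at hsum
      rw [← insert_erase hk, ← insert_erase hk',
        ih (hS.mono (erase_subset _ _)) (hS'.mono (erase_subset _ _))
          (erase_subset_range_of_subset_range_add_one h)
          (erase_subset_range_of_subset_range_add_one h') (by omega)]
    · exact ih hS hS' (subset_range_of_subset_range_add_one h hk)
        (subset_range_of_subset_range_add_one h' (hmem.not.1 hk)) hsum

theorem injOn_sum (hT : IsTribonacci T) :
    Set.InjOn (fun S => ∑ j ∈ S, T j) {S | NoThreeConsecutive S} := by
  intro S hS S' hS' hsum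
  obtain ⟨k, hk⟩ := exists_nat_subset_range (S ∪ S')
  rw [union_subset_iff] at hk
  exact hT.eq_of_sum_eq_of_subset_range hS hS' hk.1 hk.2 hsum

theorem exists_subset_range_sum_eq (hT : IsTribonacci T) :
    ∀ {k m : ℕ}, m < T k → ∃ S, NoThreeConsecutive S ∧ S ⊆ range k ∧ ∑ j ∈ S, T j = m
  | 0, m, hm => by
    obtain rfl : m = 0 := by rw [hT.zero] at hm; omega
    exact ⟨∅, .of_subset_range_two (empty_subset _), empty_subset _, sum_empty⟩
  | 1, m, hm => by
    rw [hT.one] at hm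
    interval_cases m
    · exact ⟨∅, .of_subset_range_two (empty_subset _), empty_subset _, sum_empty⟩
    · exact ⟨{0}, .of_subset_range_two (by decide), by decide, by simp [hT.zero]⟩
  | 2, m, hm => by
    rw [hT.two] at hm
    interval_cases m
    · exact ⟨∅, .of_subset_range_two (empty_subset _), empty_subset _, sum_empty⟩
    · exact ⟨{0}, .of_subset_range_two (by decide), by decide, by simp [hT.zero]⟩
    · exact ⟨{1}, .of_subset_range_two (by decide), by decide, by simp [hT.one]⟩
    · exact ⟨{0, 1}, .of_subset_range_two (by decide), by decide, by simp [hT.zero, hT.one]⟩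
  | k + 3, m, hm => by
    rw [hT.add_three] at hm
    by_cases h2 : m < T (k + 2)
    · obtain ⟨S, hS, h, rfl⟩ := hT.exists_subset_range_sum_eq h2
      exact ⟨S, hS, h.trans (range_subset_range.2 (by omega)), rfl⟩
    by_cases h1 : m - T (k + 2) < T (k + 1)
    · obtain ⟨S, hS, h, hsum⟩ := hT.exists_subset_range_sum_eq h1
      have hk : k + 2 ∉ S := fun hk => by simpa using h hk
      refine ⟨insert (k + 2) S, (hS.insert_insert_of_subset_range h).mono (subset_insert _ _),
        insert_subset (by simp) (h.trans (range_subset_range.2 (by omega))), ?_⟩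
      rw [sum_insert hk]
      omega
    · obtain ⟨S, hS, h, hsum⟩ := hT.exists_subset_range_sum_eq
        (show m - T (k + 2) - T (k + 1) < T k by omega)
      have hk1 : k + 1 ∉ S := fun hk => by simpa using h hk
      have hk2 : k + 2 ∉ insert (k + 1) S := by
        simp only [mem_insert, not_or]
        exact ⟨by omega, fun hk => by simpa using h hk⟩
      refine ⟨insert (k + 2) (insert (k + 1) S), hS.insert_insert_of_subset_range h, ?_, ?_⟩
      · simp only [insert_subset_iff, mem_range]
        exact ⟨by omega, by omega, h.trans (range_subset_range.2 (by omega))⟩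
      · rw [sum_insert hk2, sum_insert hk1]
        omega

end IsTribonacci

theorem tribonacci_representation_general (T : ℕ → ℕ)
    (h0 : T 0 = 1) (h1 : T 1 = 2) (h2 : T 2 = 4)
    (hrec : ∀ i, T (i + 3) = T (i + 2) + T (i + 1) + T i)
    (m : ℕ) :
    ∃! S : Finset ℕ, (∀ j, ¬(j ∈ S ∧ j + 1 ∈ S ∧ j + 2 ∈ S)) ∧
      m = ∑ j ∈ S, T j := by
  have hT : IsTribonacci T := ⟨h0, h1, h2, hrec⟩
  obtain ⟨S, hS, -, rfl⟩ := hT.exists_subset_range_sum_eq (hT.id_lt m)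
  exact ⟨S, ⟨hS, rfl⟩, fun S' ⟨hS', hsum⟩ => hT.injOn_sum hS' hS hsum.symm⟩

/-- Tribonacci numeration system: every positive integer has a unique
representation as a sum of distinct Tribonacci numbers with no three
consecutive indices used. -/
theorem tribonacci_representation (T : ℕ → ℕ)
    (h0 : T 0 = 1) (h1 : T 1 = 2) (h2 : T 2 = 4)
    (hrec : ∀ i, T (i + 3) = T (i + 2) + T (i + 1) + T i)
    (m : ℕ) (hm : 0 < m) :
    ∃! S : Finset ℕ, (∀ j, ¬(j ∈ S ∧ j + 1 ∈ S ∧ j + 2 ∈ S)) ∧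
      m = ∑ j ∈ S, T j :=
  tribonacci_representation_general T h0 h1 h2 hrec m
end

section
/- For the Fibonacci numeration system F₀ = 1, F₁ = 2, F_{i+2} = F_{i+1} + F_i, a pair (a, b) with a < b is a P-position of Wythoff's game (i.e., (a,b) = (⌊mφ⌋, ⌊mφ²⌋) for some m ≥ 1) if and only if the Zeckendorf expansion of a ends in an even number (possibly zero) of zero digits and the Zeckendorf expansion of b is obtained from that of a by appending a zero digit (equivalently, if a = Σ c_j F_j is the greedy expansion then b = Σ c_j F_{j+1}). -/
/-!
Write `m = ∑_{j ∈ S} fib (j + 1)` with `S` free of consecutive indices and with even least index.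
Binet's formula `fib (n + 1) - φ fib n = ψ ^ n` gives
`m φ = ∑_{j ∈ S} fib (j + 2) + |ψ| ∑_{j ∈ S} ψ ^ j`, and a sparse sum of powers of `ψ = -1/φ`
has the sign of its leading term and modulus below `|ψ| ^ (k - 1)`, `k` the least index. For even
`k` the error term lies in `(0, 1)`, so `⌊m φ⌋ = ∑_{j ∈ S} fib (j + 2)`, and
`⌊m φ²⌋ = ⌊m φ⌋ + m = ∑_{j ∈ S} fib (j + 3)`; note `F i = fib (i + 2)`. Conversely every `m ≥ 1`
has such a representation: the greedy one, where an odd least index is traded via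
`fib (2t + 2) = fib 1 + fib 3 + ⋯ + fib (2t + 1)`.
-/

open Finset Real
open Nat (fib fib_add_two fib_pos le_fib_add_one)

/-- The second bound is `(-1) ^ k * ∑ j ∈ S, (-y) ^ j < y ^ (k - 1)`, multiplied by `y` so that
`k = 0` needs no negative exponent. -/
theorem alternating_sum_pow_bounds {y : ℝ} (hy : 0 < y) (hy2 : y + y ^ 2 ≤ 1)
    (S : Finset ℕ) (hS : ∀ j ∈ S, j + 1 ∉ S) {k : ℕ} (hk : k ∈ S) (hmin : ∀ j ∈ S, k ≤ j) :
    0 < (-1) ^ k * ∑ j ∈ S, (-y) ^ j ∧ y * ((-1) ^ k * ∑ j ∈ S, (-y) ^ j) < y ^ k := by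
  have hy1 : y < 1 := by nlinarith
  induction S using Finset.induction_on_min generalizing k with
  | empty => simp at hk
  | insert a s has ih =>
    obtain rfl : k = a := by
      rcases mem_insert.1 hk with h | h
      · exact h
      · exact absurd (hmin a (mem_insert_self a s)) (by have := has k h; omega)
    have hlead : (-1) ^ k * (-y) ^ k = y ^ k := by rw [← mul_pow]; ring
    rw [sum_insert fun h => (has k h).false, mul_add, hlead]
    have hyk := pow_pos hy k
    rcases s.eq_empty_or_nonempty with rfl | hne
    · simpa using ⟨hyk, mul_lt_of_lt_one_left hyk hy1⟩
    obtain ⟨hk's, hmin'⟩ := s.isLeast_min' hne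
    obtain ⟨hpos, hlt⟩ := ih (fun j hj hj' => hS j (mem_insert_of_mem hj) (mem_insert_of_mem hj'))
      hk's hmin'
    obtain ⟨d, hd⟩ : ∃ d, s.min' hne = k + d := ⟨s.min' hne - k, by have := has _ hk's; omega⟩
    have hd2 : 2 ≤ d := by
      have : s.min' hne ≠ k + 1 := fun h => hS k hk (mem_insert_of_mem (h ▸ hk's))
      have := has _ hk's
      omega
    rw [hd, pow_add] at hpos hlt
    rcases Nat.even_or_odd d with hd | hd
    · rw [hd.neg_one_pow, mul_one] at hpos hlt
      have : y ^ (k + d) ≤ y ^ (k + 2) := pow_le_pow_of_le_one hy.le hy1.le (by omega)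
      have : y * y ^ k + y ^ (k + 2) ≤ y ^ k := by
        calc y * y ^ k + y ^ (k + 2) = y ^ k * (y + y ^ 2) := by ring
          _ ≤ y ^ k := mul_le_of_le_one_right hyk.le hy2
      constructor <;> nlinarith
    · rw [hd.neg_one_pow, mul_neg_one, neg_mul] at hpos hlt
      have : y * -((-1) ^ k * ∑ j ∈ s, (-y) ^ j) < y * y ^ (k + 2) := by
        calc _ < y ^ (k + d) := hlt
          _ ≤ y ^ (k + 3) := pow_le_pow_of_le_one hy.le hy1.le (by obtain ⟨e, rfl⟩ := hd; omega)
          _ = y * y ^ (k + 2) := by ring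
      have : -((-1) ^ k * ∑ j ∈ s, (-y) ^ j) < y ^ (k + 2) := lt_of_mul_lt_mul_left this hy.le
      have : y ^ (k + 2) < y ^ k := pow_lt_pow_right_of_lt_one₀ hy hy1 (by omega)
      constructor <;> nlinarith

theorem goldenRatio_mul_fib_succ (n : ℕ) :
    goldenRatio * fib (n + 1) = fib (n + 2) + (-goldenConj) * goldenConj ^ n := by
  have := fib_succ_sub_goldenRatio_mul_fib (n + 1)
  rw [pow_succ] at this
  linear_combination -this

theorem floor_sum_fib_succ_mul_goldenRatio {S : Finset ℕ} (hS : ∀ j ∈ S, j + 1 ∉ S) {k : ℕ}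
    (hk : k ∈ S) (hev : Even k) (hmin : ∀ j ∈ S, k ≤ j) :
    ⌊((∑ j ∈ S, fib (j + 1) : ℕ) : ℝ) * goldenRatio⌋ = ((∑ j ∈ S, fib (j + 2) : ℕ) : ℤ) := by
  have hy : 0 < -goldenConj := neg_pos.2 goldenConj_neg
  have hy2 : -goldenConj + (-goldenConj) ^ 2 ≤ 1 := by rw [neg_sq, goldenConj_sq]; linarith
  obtain ⟨hpos, hlt⟩ := alternating_sum_pow_bounds hy hy2 S hS hk hmin
  rw [hev.neg_one_pow, one_mul, neg_neg] at hpos hlt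
  have hsum : ((∑ j ∈ S, fib (j + 1) : ℕ) : ℝ) * goldenRatio
      = ((∑ j ∈ S, fib (j + 2) : ℕ) : ℝ) + (-goldenConj) * ∑ j ∈ S, goldenConj ^ j := by
    push_cast
    rw [mul_sum, ← sum_add_distrib, sum_mul]
    exact sum_congr rfl fun j _ => by rw [mul_comm, goldenRatio_mul_fib_succ]
  rw [Int.floor_eq_iff, hsum]
  push_cast
  have : (-goldenConj) ^ k ≤ 1 := pow_le_one₀ hy.le (by linarith [neg_one_lt_goldenConj])
  constructor <;> nlinarith [mul_pos hy hpos]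

theorem floor_natCast_mul_goldenRatio_sq (m : ℕ) :
    ⌊(m : ℝ) * goldenRatio ^ 2⌋ = ⌊(m : ℝ) * goldenRatio⌋ + m := by
  rw [goldenRatio_sq, mul_add, mul_one, Int.floor_add_natCast]

theorem floor_mul_goldenRatio_of_even_rep {S : Finset ℕ} (hS : ∀ j ∈ S, j + 1 ∉ S) {k : ℕ}
    (hk : k ∈ S) (hev : Even k) (hmin : ∀ j ∈ S, k ≤ j) :
    ⌊((∑ j ∈ S, fib (j + 1) : ℕ) : ℝ) * goldenRatio⌋ = ((∑ j ∈ S, fib (j + 2) : ℕ) : ℤ) ∧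
      ⌊((∑ j ∈ S, fib (j + 1) : ℕ) : ℝ) * goldenRatio ^ 2⌋ = ((∑ j ∈ S, fib (j + 3) : ℕ) : ℤ) := by
  have hfloor := floor_sum_fib_succ_mul_goldenRatio hS hk hev hmin
  refine ⟨hfloor, ?_⟩
  rw [floor_natCast_mul_goldenRatio_sq, hfloor, ← Nat.cast_add, ← sum_add_distrib]
  exact congrArg _ (sum_congr rfl fun j _ => (fib_add_two.trans (add_comm _ _)).symm)

theorem no_consecutive_insert {S : Finset ℕ} (hS : ∀ j ∈ S, j + 1 ∉ S) {k : ℕ}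
    (hk : ∀ j ∈ S, j + 1 < k) : ∀ j ∈ insert k S, j + 1 ∉ insert k S := by
  intro j hj hj'
  rcases mem_insert.1 hj with rfl | hj <;> rcases mem_insert.1 hj' with h | h
  · omega
  · exact absurd (hk _ h) (by omega)
  · exact absurd (hk _ hj) (by omega)
  · exact hS j hj h

theorem exists_rep_fib_two_mul_add_two (t : ℕ) :
    ∃ S : Finset ℕ, (∀ j ∈ S, j ≤ 2 * t) ∧ (∀ j ∈ S, j + 1 ∉ S) ∧ 0 ∈ S ∧
      fib (2 * t + 2) = ∑ j ∈ S, fib (j + 1) := by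
  induction t with
  | zero => exact ⟨{0}, by simp, by simp, by simp, rfl⟩
  | succ t ih =>
    obtain ⟨S, hle, hS, h0, hsum⟩ := ih
    have hlt : ∀ j ∈ S, j + 1 < 2 * t + 2 := fun j hj => by have := hle j hj; omega
    refine ⟨insert (2 * t + 2) S, ?_, no_consecutive_insert hS hlt, mem_insert_of_mem h0, ?_⟩
    · simpa using ⟨by omega, fun j hj => by have := hle j hj; omega⟩
    · rw [sum_insert fun h => by have := hle _ h; omega, ← hsum,
        show 2 * (t + 1) + 2 = (2 * t + 2) + 2 by ring, fib_add_two, add_comm]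

theorem exists_even_rep_fib_succ (n : ℕ) :
    ∃ S : Finset ℕ, (∀ j ∈ S, j ≤ n) ∧ (∀ j ∈ S, j + 1 ∉ S) ∧
      (∃ j₀ ∈ S, Even j₀ ∧ ∀ j ∈ S, j₀ ≤ j) ∧ fib (n + 1) = ∑ j ∈ S, fib (j + 1) := by
  rcases Nat.even_or_odd n with hn | ⟨t, rfl⟩
  · exact ⟨{n}, by simp, by simp, ⟨n, by simp, hn, by simp⟩, by simp⟩
  · obtain ⟨S, hle, hS, h0, hsum⟩ := exists_rep_fib_two_mul_add_two t
    exact ⟨S, fun j hj => (hle j hj).trans (by omega), hS, ⟨0, h0, Even.zero, fun j _ => j.zero_le⟩,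
      hsum⟩

theorem exists_even_rep_of_lt_fib (k m : ℕ) (hm : 0 < m) (hmk : m < fib (k + 1)) :
    ∃ S : Finset ℕ, (∀ j ∈ S, j < k) ∧ (∀ j ∈ S, j + 1 ∉ S) ∧
      (∃ j₀ ∈ S, Even j₀ ∧ ∀ j ∈ S, j₀ ≤ j) ∧ m = ∑ j ∈ S, fib (j + 1) := by
  induction k using Nat.strong_induction_on generalizing m with
  | _ k ih =>
  match k, ih with
  | 0, _ | 1, _ => simp at hmk; omega
  | k + 2, ih =>
    rcases lt_trichotomy m (fib (k + 2)) with hlt | rfl | hgt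
    · obtain ⟨S, hle, hrest⟩ := ih (k + 1) (by omega) m hm hlt
      exact ⟨S, fun j hj => (hle j hj).trans (by omega), hrest⟩
    · obtain ⟨S, hle, hrest⟩ := exists_even_rep_fib_succ (k + 1)
      exact ⟨S, fun j hj => (hle j hj).trans_lt (by omega), hrest⟩
    · have hfib : fib (k + 2 + 1) = fib (k + 1) + fib (k + 2) := fib_add_two
      have hr : m - fib (k + 2) < fib (k + 1) := by omega
      obtain ⟨S, hle, hS, ⟨j₀, hj₀, hev, hmin⟩, hsum⟩ := ih k (by omega) _ (by omega) hr
      refine ⟨insert (k + 1) S, ?_, no_consecutive_insert hS fun j hj => by have := hle j hj; omega,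
        ⟨j₀, mem_insert_of_mem hj₀, hev, ?_⟩, ?_⟩
      · simpa using fun j hj => (hle j hj).trans (by omega)
      · simpa using ⟨(hle j₀ hj₀).le.trans (by omega), hmin⟩
      · rw [sum_insert fun h => by have := hle _ h; omega, ← hsum]
        change m = fib (k + 2) + _
        omega

theorem exists_even_rep {m : ℕ} (hm : 0 < m) : ∃ S : Finset ℕ, (∀ j ∈ S, j + 1 ∉ S) ∧
    (∃ j₀ ∈ S, Even j₀ ∧ ∀ j ∈ S, j₀ ≤ j) ∧ m = ∑ j ∈ S, fib (j + 1) := by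
  obtain ⟨S, -, hrest⟩ := exists_even_rep_of_lt_fib (m + 1) m hm
    (by simpa using le_fib_add_one (m + 2))
  exact ⟨S, hrest⟩

theorem eq_fib_add_two {F : ℕ → ℕ} (h0 : F 0 = 1) (h1 : F 1 = 2)
    (hrec : ∀ i, F (i + 2) = F (i + 1) + F i) (n : ℕ) : F n = fib (n + 2) := by
  induction n using Nat.twoStepInduction with
  | zero => exact h0
  | one => exact h1
  | more n ih₀ ih₁ => rw [hrec, ih₀, ih₁, fib_add_two (n := n + 2), add_comm]

theorem wythoff_zeckendorf_characterization_general
    (F : ℕ → ℕ) (h0 : F 0 = 1) (h1 : F 1 = 2)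
    (hrec : ∀ i, F (i + 2) = F (i + 1) + F i)
    (φ : ℝ) (hφ : φ = (1 + Real.sqrt 5) / 2)
    (a b : ℕ) :
    (∃ m : ℕ, 1 ≤ m ∧ (a : ℤ) = ⌊(m : ℝ) * φ⌋ ∧ (b : ℤ) = ⌊(m : ℝ) * φ ^ 2⌋) ↔
    (∃ S : Finset ℕ, (∀ j ∈ S, j + 1 ∉ S) ∧
      (∃ j₀ ∈ S, Even j₀ ∧ ∀ j ∈ S, j₀ ≤ j) ∧
      a = ∑ j ∈ S, F j ∧ b = ∑ j ∈ S, F (j + 1)) := by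
  obtain rfl : φ = goldenRatio := hφ
  simp only [eq_fib_add_two h0 h1 hrec]
  constructor
  · rintro ⟨m, hm, ha, hb⟩
    obtain ⟨S, hS, ⟨j₀, hj₀, hev, hmin⟩, rfl⟩ := exists_even_rep hm
    obtain ⟨ha', hb'⟩ := floor_mul_goldenRatio_of_even_rep hS hj₀ hev hmin
    exact ⟨S, hS, ⟨j₀, hj₀, hev, hmin⟩, by exact_mod_cast ha.trans ha',
      by exact_mod_cast hb.trans hb'⟩
  · rintro ⟨S, hS, ⟨j₀, hj₀, hev, hmin⟩, rfl, rfl⟩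
    obtain ⟨ha', hb'⟩ := floor_mul_goldenRatio_of_even_rep hS hj₀ hev hmin
    exact ⟨∑ j ∈ S, fib (j + 1), (fib_pos.2 (Nat.succ_pos j₀)).trans_le
      (single_le_sum (f := fun j => fib (j + 1)) (fun _ _ => Nat.zero_le _) hj₀),
      ha'.symm, hb'.symm⟩

/-- Zeckendorf characterization of the P-positions of Wythoff's game: a pair
(a, b) with a < b is of the form (⌊mφ⌋, ⌊mφ²⌋) for some m ≥ 1 iff the
Zeckendorf expansion of `a` ends in an even number of zeros (its least used
index is even) and the expansion of `b` is that of `a` shifted by one index. -/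
theorem wythoff_zeckendorf_characterization
    (F : ℕ → ℕ) (h0 : F 0 = 1) (h1 : F 1 = 2)
    (hrec : ∀ i, F (i + 2) = F (i + 1) + F i)
    (φ : ℝ) (hφ : φ = (1 + Real.sqrt 5) / 2)
    (a b : ℕ) (hab : a < b) :
    (∃ m : ℕ, 1 ≤ m ∧ (a : ℤ) = ⌊(m : ℝ) * φ⌋ ∧ (b : ℤ) = ⌊(m : ℝ) * φ ^ 2⌋) ↔
    (∃ S : Finset ℕ, (∀ j ∈ S, j + 1 ∉ S) ∧
      (∃ j₀ ∈ S, Even j₀ ∧ ∀ j ∈ S, j₀ ≤ j) ∧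
      a = ∑ j ∈ S, F j ∧ b = ∑ j ∈ S, F (j + 1)) :=
  wythoff_zeckendorf_characterization_general F h0 h1 hrec φ hφ a b
end
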